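/- arXiv:1602.07565 — 3 statements merged into one kernel-verified Lean document; each statement's English description precedes it below -/
import Mathlib

section
/- Structure of reachable belief supports of the product POMDP: let M = (S, A, δ, Z, O, λ) be a POMDP, E : A × Z → ℤ, cap ∈ ℕ, and let M× be the product POMDP. Then for every finite history ρ of M×, either B(ρ) = {⊥}, or there exists n ∈ [cap] such that B(ρ) ⊆ S × {n} (i.e. all states in B(ρ) carry the same energy component, and ⊥ never occurs together with a product state in a belief support). -/
/-!
The energy component of a state of `M×` is a function of the observed history: along any run
it starts at `cap` and is updated by `EnUp`, which only depends on the current observation and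
action, while `⊥` is the only state observed as `⊥`. Hence two runs with the same history end
in states with the same energy component, or both in `⊥`.
-/

open scoped ENNReal

/-- A POMDP with state space `S`, actions `A`, observations `Z`
(deterministic observation function, cf. Remark on deterministic observations). -/
structure POMDP (S A Z : Type) where
  /-- probabilistic transition function -/
  trans : S → A → PMF S
  /-- deterministic observation function -/
  obs : S → Z
  /-- initial distribution -/
  init : PMF S

namespace POMDP

variable {S A Z : Type}

/-- `(st, ac)` encodes a finite run `st 0, ac 0, st 1, ac 1, …, st k` of length `k`
(`ac i` is the action `a_{i+1}` taken between `st i` and `st (i+1)`). -/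
def IsFinRun (M : POMDP S A Z) (st : ℕ → S) (ac : ℕ → A) (k : ℕ) : Prop :=
  st 0 ∈ M.init.support ∧ ∀ i, i < k → M.trans (st i) (ac i) (st (i + 1)) ≠ 0

/-- `(st, ac)` encodes an infinite run. -/
def IsInfRun (M : POMDP S A Z) (st : ℕ → S) (ac : ℕ → A) : Prop :=
  st 0 ∈ M.init.support ∧ ∀ i, M.trans (st i) (ac i) (st (i + 1)) ≠ 0

/-- `(zs, ac, k)` encodes a finite history `zs 0, ac 0, zs 1, …, zs k`:
it is a history if it is the observation of some finite run. -/
def IsHistory (M : POMDP S A Z) (zs : ℕ → Z) (ac : ℕ → A) (k : ℕ) : Prop :=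
  ∃ st, M.IsFinRun st ac k ∧ ∀ i, i ≤ k → M.obs (st i) = zs i

/-- The belief support `B(ρ)` of the finite history `ρ = (zs, ac, k)`: states in which some
finite run with observation `ρ` ends. -/
def beliefSupport (M : POMDP S A Z) (zs : ℕ → Z) (ac : ℕ → A) (k : ℕ) : Set S :=
  { s | ∃ st, M.IsFinRun st ac k ∧ (∀ i, i ≤ k → M.obs (st i) = zs i) ∧ st k = s }

/-- `BS(M)`: the set of belief supports of finite histories of `M`. -/
def BS (M : POMDP S A Z) : Set (Set S) :=
  { B | ∃ zs ac k, M.IsHistory zs ac k ∧ B = M.beliefSupport zs ac k }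

/-- One-step resource update `EnUp(s, a, n) = min {cap, n + E(a, O(s))}`. -/
def EnUp (M : POMDP S A Z) (E : A → Z → ℤ) (cap : ℕ) (s : S) (a : A) (n : ℤ) : ℤ :=
  min (cap : ℤ) (n + E a (M.obs s))

/-- Energy level after `i` steps along the run `(st, ac)`:
`EL(w,0) = cap`, `EL(w,i) = EnUp(s_{i-1}, a_i, EL(w,i-1))`. -/
def EL (M : POMDP S A Z) (E : A → Z → ℤ) (cap : ℕ) (st : ℕ → S) (ac : ℕ → A) : ℕ → ℤ
  | 0 => (cap : ℤ)
  | i + 1 => M.EnUp E cap (st i) (ac i) (EL M E cap st ac i)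

/-- States of the product POMDP: `S × [cap] ∪ {⊥}`, where the element `n : Fin cap`
represents the energy level `n + 1 ∈ {1, …, cap}` and `none` is the sink `⊥`. -/
abbrev ProdState (S : Type) (cap : ℕ) : Type := Option (S × Fin cap)

/-- Transition function of the product POMDP. -/
noncomputable def prodTrans (M : POMDP S A Z) (E : A → Z → ℤ) (cap : ℕ) :
    ProdState S cap → A → PMF (ProdState S cap)
  | none, _ => PMF.pure none
  | some (s, n), a =>
    if h : 1 ≤ M.EnUp E cap s a (((n : ℕ) : ℤ) + 1) then
      (M.trans s a).map (fun s' =>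
        some (s', ⟨(M.EnUp E cap s a (((n : ℕ) : ℤ) + 1) - 1).toNat, by
          have h2 : M.EnUp E cap s a (((n : ℕ) : ℤ) + 1) ≤ (cap : ℤ) := min_le_left _ _
          omega⟩))
    else PMF.pure none

/-- The product POMDP `M×`. -/
noncomputable def prod (M : POMDP S A Z) (E : A → Z → ℤ) (cap : ℕ) :
    POMDP (ProdState S cap) A (Option Z) where
  trans := M.prodTrans E cap
  obs := fun t => t.map (fun p => M.obs p.1)
  init := M.init.map (fun s => if h : 0 < cap then some (s, ⟨cap - 1, by omega⟩) else none)

/-- The target set `T× = T × [cap]` of the product POMDP. -/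
def prodTarget (T : Set S) (cap : ℕ) : Set (ProdState S cap) :=
  { t | ∃ p : S × Fin cap, t = some p ∧ p.1 ∈ T }

/-- The cost function `c×` of the product POMDP. -/
def prodCost (c : S → A → ℕ) (cap : ℕ) : ProdState S cap → A → ℕ
  | none, _ => 1
  | some (s, _), a => c s a

/-- A policy: a map from finite histories (encoded as an initial observation together
with the list of subsequent action–observation pairs) to distributions over actions. -/
abbrev Policy (A Z : Type) : Type := Z × List (A × Z) → PMF A

/-- Observation of a finite path `(s0, steps)`. -/
def obsHist (M : POMDP S A Z) (s0 : S) (steps : List (A × S)) : Z × List (A × Z) :=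
  (M.obs s0, steps.map (fun p => (p.1, M.obs p.2)))

/-- The last state of a finite path `(s0, steps)`. -/
def lastState (s0 : S) (steps : List (A × S)) : S :=
  (steps.map Prod.snd).getLastD s0

/-- Probability (under policy `σ`) that the path continues from `(s0, pre)` by `rest`. -/
noncomputable def extProb (M : POMDP S A Z) (σ : Policy A Z) (s0 : S) :
    List (A × S) → List (A × S) → ℝ≥0∞
  | _, [] => 1
  | pre, (a, s') :: rest =>
      σ (M.obsHist s0 pre) a * M.trans (lastState s0 pre) a s' *
        extProb M σ s0 (pre ++ [(a, s')]) rest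

/-- Probability (under policy `σ`) of the finite path `p = (s0, steps)`:
`λ(s0) · Π_i σ(history_i)(a_{i+1}) · δ(s_{i+1} ∣ s_i, a_{i+1})`. -/
noncomputable def pathProb (M : POMDP S A Z) (σ : Policy A Z) (p : S × List (A × S)) : ℝ≥0∞ :=
  M.init p.1 * M.extProb σ p.1 [] p.2

/-- The finite path `(s, steps)` hits `T` exactly at its last state. -/
def firstHit (T : Set S) : S → List (A × S) → Prop
  | s, [] => s ∈ T
  | s, (_, s') :: rest => s ∉ T ∧ firstHit T s' rest

/-- Total cost of a finite path. -/
def pathCost (c : S → A → ℕ) : S → List (A × S) → ℕ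
  | _, [] => 0
  | s, (a, s') :: rest => c s a + pathCost c s' rest

open Classical in
/-- `P^σ(Reach_T)`: probability that a run generated under policy `σ` reaches `T`,
expressed as the sum of the probabilities of all finite paths hitting `T` for the first
time at their last state. -/
noncomputable def probReach (M : POMDP S A Z) (σ : Policy A Z) (T : Set S) : ℝ≥0∞ :=
  ∑' p : S × List (A × S), if firstHit T p.1 p.2 then M.pathProb σ p else 0

open Classical in
/-- `E^σ[TC_T^c]`: expected total cost until reaching `T` under policy `σ`. Runs never
reaching `T` have infinite total cost, contributing `(1 - P^σ(Reach_T)) · ∞`. -/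
noncomputable def expCost (M : POMDP S A Z) (σ : Policy A Z) (T : Set S)
    (c : S → A → ℕ) : ℝ≥0∞ :=
  (∑' p : S × List (A × S),
      if firstHit T p.1 p.2 then M.pathProb σ p * (pathCost c p.1 p.2 : ℝ≥0∞) else 0)
    + (1 - M.probReach σ T) * ⊤

/-- Observed history of the prefix of length `i` of the run `(st, ac)`. -/
def histPrefix (M : POMDP S A Z) (st : ℕ → S) (ac : ℕ → A) (i : ℕ) : Z × List (A × Z) :=
  (M.obs (st 0), (List.range i).map (fun j => (ac j, M.obs (st (j + 1)))))

/-- The infinite run `(st, ac)` conforms to the policy `σ`. -/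
def Conforms (M : POMDP S A Z) (σ : Policy A Z) (st : ℕ → S) (ac : ℕ → A) : Prop :=
  ∀ i, σ (M.histPrefix st ac i) (ac i) ≠ 0

/-- `σ ∈ EnSafe^M_T(E, cap)`: every infinite run conforming to `σ` keeps the energy level
positive in every step until the first visit to `T`. -/
def EnSafe (M : POMDP S A Z) (T : Set S) (E : A → Z → ℤ) (cap : ℕ) (σ : Policy A Z) : Prop :=
  ∀ st ac, M.IsInfRun st ac → M.Conforms σ st ac →
    ∀ i, 0 < i → (∀ j, j < i → st j ∉ T) → 0 < M.EL E cap st ac i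

open Classical in
/-- Total cost `TC_T^c(w)` of the infinite run `w = (st, ac)`; `⊤` if `T` is never reached. -/
noncomputable def totalCost (T : Set S) (c : S → A → ℕ) (st : ℕ → S) (ac : ℕ → A) : ℕ∞ :=
  if h : ∃ j, st j ∈ T then
    (((Finset.range (Nat.find h)).sum fun i => c (st i) (ac i) : ℕ) : ℕ∞)
  else ⊤

/-- `lst` is, at index `i`, the lift of the run `(st, ac)` to the product POMDP:
`lst i = (st i, EL(w, i))` if `EL(w, j) ≥ 1` for all `1 ≤ j ≤ i`, and `lst i = ⊥` otherwise. -/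
def IsLift (M : POMDP S A Z) (E : A → Z → ℤ) (cap : ℕ) (st : ℕ → S) (ac : ℕ → A)
    (lst : ℕ → ProdState S cap) (i : ℕ) : Prop :=
  ((∀ j, 1 ≤ j → j ≤ i → 1 ≤ M.EL E cap st ac j) →
      ∃ n : Fin cap, ((n : ℕ) : ℤ) + 1 = M.EL E cap st ac i ∧ lst i = some (st i, n)) ∧
  ((¬ ∀ j, 1 ≤ j → j ≤ i → 1 ≤ M.EL E cap st ac j) → lst i = none)

lemma IsFinRun.mono {M : POMDP S A Z} {st : ℕ → S} {ac : ℕ → A} {j k : ℕ}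
    (h : M.IsFinRun st ac k) (hjk : j ≤ k) : M.IsFinRun st ac j :=
  ⟨h.1, fun i hi => h.2 i (by omega)⟩

variable (M : POMDP S A Z) (E : A → Z → ℤ) (cap : ℕ)

lemma EnUp_congr_obs {s s' : S} (hs : M.obs s = M.obs s') (a : A) (n : ℤ) :
    M.EnUp E cap s a n = M.EnUp E cap s' a n := by
  simp only [EnUp, hs]

lemma prod_init_energy {s : S} {n : Fin cap} (h : (M.prod E cap).init (some (s, n)) ≠ 0) :
    (n : ℤ) + 1 = cap := by
  have hcap : 0 < cap := n.pos
  have hmem := (PMF.mem_support_iff _ _).mpr h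
  simp only [prod, PMF.support_map] at hmem
  obtain ⟨_, -, hs₀⟩ := hmem
  simp only [hcap, dif_pos, Option.some.injEq, Prod.mk.injEq] at hs₀
  rw [← hs₀.2, Fin.val_mk]
  omega

lemma exists_eq_some_of_prod_trans {t : ProdState S cap} {a : A} {p : S × Fin cap}
    (h : (M.prod E cap).trans t a (some p) ≠ 0) : ∃ q, t = some q := by
  rcases t with _ | q
  · simp [prod, prodTrans] at h
  · exact ⟨q, rfl⟩

lemma prod_trans_energy {s s' : S} {n n' : Fin cap} {a : A}
    (h : (M.prod E cap).trans (some (s, n)) a (some (s', n')) ≠ 0) :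
    (n' : ℤ) + 1 = M.EnUp E cap s a (n + 1) := by
  have hmem := (PMF.mem_support_iff _ _).mpr h
  simp only [prod, prodTrans] at hmem
  split_ifs at hmem with hpos
  · rw [PMF.support_map] at hmem
    obtain ⟨_, -, hmk⟩ := hmem
    simp only [Option.some.injEq, Prod.mk.injEq] at hmk
    rw [← hmk.2, Fin.val_mk]
    omega
  · simp at hmem

variable {M E cap}

lemma prod_energy_eq_of_obs_eq {st st' : ℕ → ProdState S cap} {ac : ℕ → A} {k : ℕ}
    (hst : (M.prod E cap).IsFinRun st ac k) (hst' : (M.prod E cap).IsFinRun st' ac k)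
    (hobs : ∀ i ≤ k, (M.prod E cap).obs (st i) = (M.prod E cap).obs (st' i))
    {s s' : S} {n n' : Fin cap} (hk : st k = some (s, n)) (hk' : st' k = some (s', n')) :
    n = n' := by
  induction k generalizing s s' n n' with
  | zero =>
    have h₀ := prod_init_energy M E cap (hk ▸ (PMF.mem_support_iff _ _).mp hst.1)
    have h₀' := prod_init_energy M E cap (hk' ▸ (PMF.mem_support_iff _ _).mp hst'.1)
    exact Fin.ext (by omega)
  | succ k ih =>
    have htr := hst.2 k k.lt_succ_self
    have htr' := hst'.2 k k.lt_succ_self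
    rw [hk] at htr
    rw [hk'] at htr'
    obtain ⟨⟨p, m⟩, hp⟩ := exists_eq_some_of_prod_trans M E cap htr
    obtain ⟨⟨p', m'⟩, hp'⟩ := exists_eq_some_of_prod_trans M E cap htr'
    have hm : m = m' :=
      ih (hst.mono k.le_succ) (hst'.mono k.le_succ) (fun i hi => hobs i (by omega)) hp hp'
    have hpp' : M.obs p = M.obs p' := by
      simpa [prod, hp, hp'] using hobs k (by omega)
    rw [hp] at htr
    rw [hp'] at htr'
    have hn := prod_trans_energy M E cap htr
    have hn' := prod_trans_energy M E cap htr'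
    rw [hm, EnUp_congr_obs M E cap hpp'] at hn
    exact Fin.ext (by omega)

end POMDP

theorem stmt4_general {S A Z : Type}
    (M : POMDP S A Z) (E : A → Z → ℤ) (cap : ℕ)
    (zs : ℕ → Option Z) (ac : ℕ → A) (k : ℕ)
    (h : (M.prod E cap).IsHistory zs ac k) :
    (M.prod E cap).beliefSupport zs ac k = {none} ∨
      ∃ n : Fin cap, (M.prod E cap).beliefSupport zs ac k ⊆
        { t : POMDP.ProdState S cap | ∃ s : S, t = some (s, n) } := by
  obtain ⟨st₀, hrun₀, hobs₀⟩ := h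
  have hobs_eq : ∀ {st : ℕ → POMDP.ProdState S cap}, (∀ i ≤ k, (M.prod E cap).obs (st i) = zs i) →
      ∀ i ≤ k, (M.prod E cap).obs (st i) = (M.prod E cap).obs (st₀ i) := fun hobs i hi =>
    (hobs i hi).trans (hobs₀ i hi).symm
  rcases hst₀ : st₀ k with _ | ⟨s₀, n₀⟩
  · refine Or.inl (Set.eq_singleton_iff_unique_mem.mpr ⟨⟨st₀, hrun₀, hobs₀, hst₀⟩, ?_⟩)
    rintro t ⟨st, -, hobs, rfl⟩
    simpa [POMDP.prod, hst₀] using hobs_eq hobs k le_rfl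
  · refine Or.inr ⟨n₀, ?_⟩
    rintro t ⟨st, hrun, hobs, rfl⟩
    rcases hst : st k with _ | ⟨s, n⟩
    · simpa [POMDP.prod, hst, hst₀] using hobs_eq hobs k le_rfl
    · exact ⟨s, by rw [POMDP.prod_energy_eq_of_obs_eq hrun hrun₀ (hobs_eq hobs) hst hst₀]⟩

/-- structure of reachable belief supports of the product POMDP: every
belief support of a finite history of `M×` is either `{⊥}` or consists solely of product
states all carrying the same energy component. -/
theorem stmt4 {S A Z : Type} [Fintype S] [Fintype A] [Fintype Z]
    (M : POMDP S A Z) (E : A → Z → ℤ) (cap : ℕ)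
    (zs : ℕ → Option Z) (ac : ℕ → A) (k : ℕ)
    (h : (M.prod E cap).IsHistory zs ac k) :
    (M.prod E cap).beliefSupport zs ac k = {none} ∨
      ∃ n : Fin cap, (M.prod E cap).beliefSupport zs ac k ⊆
        { t : POMDP.ProdState S cap | ∃ s : S, t = some (s, n) } :=
  stmt4_general M E cap zs ac k h
end

section
/- Refined counting of belief supports: let M = (S, A, δ, Z, O, λ) be a POMDP, E : A × Z → ℤ, cap ∈ ℕ, and let M× be the product POMDP. Then |BS(M×)| ≤ cap · (2^{|S|} − 1) + 1. -/
open scoped ENNReal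

/-!
The energy component of a state of `M×` is determined by the observed history: both the
observation and the action fed to `EnUp` are visible. Hence every belief support of `M×` is
either `{⊥}` or a nonempty set of states `(s, n)` sharing one energy level `n`, and there are
`cap · (2^|S| - 1)` sets of the latter kind.
-/

lemma Set.natCard_subtype_nonempty (α : Type*) [Fintype α] :
    Nat.card {T : Set α // T.Nonempty} = 2 ^ Fintype.card α - 1 := by
  classical
  simp_rw [Set.nonempty_iff_ne_empty]
  rw [Nat.card_eq_fintype_card, Fintype.card_subtype_compl, Fintype.card_set,
    Fintype.card_subtype_eq]

namespace POMDP

variable {S A Z : Type} {M : POMDP S A Z} {E : A → Z → ℤ} {cap : ℕ}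

def ProdState.level : ProdState S cap → Option (Fin cap) := Option.map Prod.snd

lemma level_eq_of_mem_init_support {t t' : ProdState S cap}
    (ht : t ∈ (M.prod E cap).init.support) (ht' : t' ∈ (M.prod E cap).init.support) :
    t.level = t'.level := by
  simp only [prod, PMF.support_map, Set.mem_image] at ht ht'
  obtain ⟨s, -, rfl⟩ := ht
  obtain ⟨s', -, rfl⟩ := ht'
  split_ifs <;> rfl

lemma level_eq_of_mem_trans_support {t t' u u' : ProdState S cap} {a : A}
    (hobs : (M.prod E cap).obs t = (M.prod E cap).obs t') (hlevel : t.level = t'.level)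
    (hu : u ∈ ((M.prod E cap).trans t a).support)
    (hu' : u' ∈ ((M.prod E cap).trans t' a).support) :
    u.level = u'.level := by
  rcases t with _ | ⟨s, n⟩ <;> rcases t' with _ | ⟨s', n'⟩ <;>
    simp only [ProdState.level, Option.map_none, Option.map_some, reduceCtorEq,
      Option.some.injEq] at hlevel
  · simp only [prod, prodTrans, PMF.support_pure, Set.mem_singleton_iff] at hu hu'
    rw [hu, hu']
  · subst hlevel
    have hobs_eq : M.obs s = M.obs s' := by simpa [prod] using hobs
    have henup :
        M.EnUp E cap s a (((n : ℕ) : ℤ) + 1) = M.EnUp E cap s' a (((n : ℕ) : ℤ) + 1) := by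
      rw [EnUp, EnUp, hobs_eq]
    simp only [prod] at hu hu'
    by_cases he : 1 ≤ M.EnUp E cap s a (((n : ℕ) : ℤ) + 1)
    · rw [prodTrans, dif_pos he, PMF.support_map] at hu
      rw [prodTrans, dif_pos (henup ▸ he), PMF.support_map] at hu'
      obtain ⟨-, -, rfl⟩ := hu
      obtain ⟨-, -, rfl⟩ := hu'
      simp [ProdState.level, henup]
    · rw [prodTrans, dif_neg he, PMF.support_pure] at hu
      rw [prodTrans, dif_neg (henup ▸ he), PMF.support_pure] at hu'
      rw [hu, hu']

lemma IsFinRun.level_eq_of_obs_eq {st st' : ℕ → ProdState S cap} {ac : ℕ → A} {k : ℕ}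
    (h : (M.prod E cap).IsFinRun st ac k) (h' : (M.prod E cap).IsFinRun st' ac k)
    (hobs : ∀ i ≤ k, (M.prod E cap).obs (st i) = (M.prod E cap).obs (st' i)) :
    ∀ i ≤ k, (st i).level = (st' i).level
  | 0, _ => level_eq_of_mem_init_support h.1 h'.1
  | i + 1, hi =>
    level_eq_of_mem_trans_support (hobs i (by omega))
      (h.level_eq_of_obs_eq h' hobs i (by omega))
      ((PMF.mem_support_iff _ _).2 (h.2 i hi)) ((PMF.mem_support_iff _ _).2 (h'.2 i hi))

lemma beliefSupport_prod_subset_level {zs : ℕ → Option Z} {ac : ℕ → A} {k : ℕ}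
    {st : ℕ → ProdState S cap} (hrun : (M.prod E cap).IsFinRun st ac k)
    (hobs : ∀ i ≤ k, (M.prod E cap).obs (st i) = zs i) :
    (M.prod E cap).beliefSupport zs ac k ⊆ {t | t.level = (st k).level} := by
  rintro _ ⟨st', hrun', hobs', rfl⟩
  exact hrun'.level_eq_of_obs_eq hrun (fun i hi => (hobs' i hi).trans (hobs i hi).symm) k le_rfl

lemma BS_prod_subset :
    (M.prod E cap).BS ⊆ insert {none}
      (Set.range fun p : Fin cap × {T : Set S // T.Nonempty} =>
        (fun s => some (s, p.1)) '' p.2) := by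
  rintro _ ⟨zs, ac, k, ⟨st, hrun, hobs⟩, rfl⟩
  have hmem : st k ∈ (M.prod E cap).beliefSupport zs ac k := ⟨st, hrun, hobs, rfl⟩
  have hsub := beliefSupport_prod_subset_level hrun hobs
  rcases hst : st k with _ | ⟨s, n⟩
  · refine Or.inl (Set.eq_singleton_iff_unique_mem.2 ⟨hst ▸ hmem, fun t ht => ?_⟩)
    simpa [ProdState.level, hst] using hsub ht
  · refine Or.inr ⟨(n, ⟨(fun s' => some (s', n)) ⁻¹' _, s,
      show some (s, n) ∈ _ from hst ▸ hmem⟩), Set.image_preimage_eq_of_subset fun t ht => ?_⟩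
    obtain ⟨⟨s', n'⟩, rfl, rfl⟩ := Option.map_eq_some_iff.1 (hst ▸ hsub ht)
    exact ⟨s', rfl⟩

end POMDP

theorem stmt5_general {S A Z : Type} [Fintype S]
    (M : POMDP S A Z) (E : A → Z → ℤ) (cap : ℕ) :
    (POMDP.BS (M.prod E cap)).ncard ≤ cap * (2 ^ Fintype.card S - 1) + 1 := by
  refine (Set.ncard_le_ncard (POMDP.BS_prod_subset (M := M) (E := E))).trans
    ((Set.ncard_insert_le _ _).trans ?_)
  calc (Set.range _).ncard + 1
      ≤ Nat.card (Fin cap × {T : Set S // T.Nonempty}) + 1 := by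
        rw [← Nat.card_coe_set_eq]
        gcongr
        exact Finite.card_range_le _
    _ = cap * (2 ^ Fintype.card S - 1) + 1 := by
        rw [Nat.card_prod, Nat.card_fin, Set.natCard_subtype_nonempty]

/-- refined counting of belief supports: `|BS(M×)| ≤ cap · (2^|S| − 1) + 1`. -/
theorem stmt5 {S A Z : Type} [Fintype S] [Fintype A] [Fintype Z]
    (M : POMDP S A Z) (E : A → Z → ℤ) (cap : ℕ) :
    (POMDP.BS (M.prod E cap)).ncard ≤ cap * (2 ^ Fintype.card S - 1) + 1 :=
  stmt5_general M E cap
end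

section
/- Policy transfer from M× to M: let M be a POMDP with target set T, cost function c, resource-change function E and capacity cap, and let M× be the product POMDP. For every policy σ̃ of M× with P^{σ̃}(Reach_{T×}) = 1, there exists a policy σ ∈ EnSafe^M_T(E, cap) such that P^{σ}(Reach_T) = 1 and E^{σ}[TC_T^{c}] = E^{σ̃}[TC_{T×}^{c×}]. -/
open scoped ENNReal

/-!
The policy on `M` simulates `σ'`: energy updates only depend on observations, so along an
observed history of `M` it can compute the corresponding history of `M×` and play `σ'` on it.
As long as the energy stays positive, a path of `M` and its lift to `M×` have the same
probability and cost and reach the target together, and every first-hit path of `M×` of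
positive probability is such a lift. So the safe first-hit paths of `M` carry mass `1`; as all
first-hit paths form a prefix antichain, they carry mass at most `1`, and the unsafe ones are
null. This gives almost-sure reachability and equal expected costs. A conforming run whose
energy is exhausted before `T` would have a prefix of positive probability; some first-hit path
of positive probability then extends it, but that path is unsafe.
-/

lemma PMF.sum_coe {α : Type} [Fintype α] (p : PMF α) : ∑ a, p a = 1 :=
  (tsum_fintype (L := .unconditional α) _).symm.trans p.tsum_coe

lemma PMF.map_apply_of_injective_at {α β : Type} {f : α → β} {p : PMF α} {a : α}
    (hf : ∀ a', f a' = f a → a' = a) : p.map f (f a) = p a := by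
  rw [PMF.map_apply]
  exact (tsum_eq_single a fun a' ha' => if_neg fun h => ha' (hf a' h.symm)).trans (if_pos rfl)

namespace POMDP

variable {S A Z : Type}

section Paths

@[simp] lemma lastState_nil (s : S) : lastState s ([] : List (A × S)) = s := rfl

@[simp] lemma lastState_cons (s : S) (x : A × S) (l : List (A × S)) :
    lastState s (x :: l) = lastState x.2 l := by
  simp only [lastState, List.map_cons, List.getLastD_cons]

lemma lastState_append (s : S) (l₁ l₂ : List (A × S)) :
    lastState s (l₁ ++ l₂) = lastState (lastState s l₁) l₂ := by
  induction l₁ generalizing s with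
  | nil => rfl
  | cons x l₁ ih => simp only [List.cons_append, lastState_cons, ih]

@[simp] lemma lastState_concat (s : S) (l : List (A × S)) (x : A × S) :
    lastState s (l ++ [x]) = x.2 := by
  rw [lastState_append, lastState_cons, lastState_nil]

def PathPrefix (p q : S × List (A × S)) : Prop :=
  p.1 = q.1 ∧ p.2 <+: q.2

lemma firstHit.lastState_mem {U : Set S} :
    ∀ {s : S} {l : List (A × S)}, firstHit U s l → lastState s l ∈ U
  | _, [], h => h
  | _, _ :: _, h => by rw [lastState_cons]; exact h.2.lastState_mem

lemma firstHit.eq_of_prefix {U : Set S} : ∀ {s : S} {l l' : List (A × S)},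
    firstHit U s l → firstHit U s l' → l <+: l' → l = l'
  | _, [], [], _, _, _ => rfl
  | _, [], _ :: _, h, h', _ => (h'.1 h).elim
  | _, _ :: _, [], _, _, hl => by simpa using hl.length_le
  | _, x :: l, y :: l', h, h', hxy => by
    obtain ⟨rfl, hl⟩ := List.cons_prefix_cons.1 hxy
    rw [h.2.eq_of_prefix h'.2 hl]

lemma isAntichain_firstHit (U : Set S) :
    IsAntichain PathPrefix {p : S × List (A × S) | firstHit U p.1 p.2} := by
  rintro ⟨s, l⟩ hp ⟨s', l'⟩ hq hne ⟨rfl, hll'⟩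
  exact hne (Prod.ext rfl (hp.eq_of_prefix hq hll'))

variable (N : POMDP S A Z) (τ : Policy A Z)

lemma extProb_append (s₀ : S) (pre l₁ l₂ : List (A × S)) :
    N.extProb τ s₀ pre (l₁ ++ l₂) =
      N.extProb τ s₀ pre l₁ * N.extProb τ s₀ (pre ++ l₁) l₂ := by
  induction l₁ generalizing pre with
  | nil => simp [extProb]
  | cons x l₁ ih =>
    obtain ⟨a, s⟩ := x
    simp only [List.cons_append, extProb, ih, List.append_assoc, List.nil_append, mul_assoc]

variable [Fintype S] [Fintype A]

lemma sum_extProb_ofFn (s₀ : S) (n : ℕ) (pre : List (A × S)) :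
    ∑ f : Fin n → A × S, N.extProb τ s₀ pre (List.ofFn f) = 1 := by
  induction n generalizing pre with
  | zero => simp [extProb]
  | succ n ih =>
    rw [← (Fin.consEquiv fun _ => A × S).sum_comp, Fintype.sum_prod_type, Fintype.sum_prod_type]
    simp only [Fin.consEquiv, Equiv.coe_fn_mk, List.ofFn_cons, extProb, ← Finset.mul_sum, ih,
      mul_one, PMF.sum_coe]

lemma pathProb_eq_sum_extend (p : S × List (A × S)) (n : ℕ) :
    N.pathProb τ p = ∑ f : Fin n → A × S, N.pathProb τ (p.1, p.2 ++ List.ofFn f) := by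
  simp only [pathProb, extProb_append, List.nil_append, ← Finset.mul_sum, sum_extProb_ofFn,
    mul_one]

lemma sum_pathProb_ofFn (n : ℕ) :
    ∑ x : S × (Fin n → A × S), N.pathProb τ (x.1, List.ofFn x.2) = 1 := by
  simp only [Fintype.sum_prod_type, pathProb, ← Finset.mul_sum, sum_extProb_ofFn, mul_one,
    PMF.sum_coe]

/-- Extend every path of `F` in all possible ways to a common length `n`: by the antichain
property the extensions of different paths are different, and all paths of length `n` together
carry mass `1`. -/
lemma sum_pathProb_le_one (F : Finset (S × List (A × S)))
    (hF : IsAntichain PathPrefix (F : Set (S × List (A × S)))) :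
    ∑ p ∈ F, N.pathProb τ p ≤ 1 := by
  classical
  obtain ⟨n, hn⟩ : ∃ n, ∀ p ∈ F, p.2.length ≤ n :=
    ⟨_, fun p hp => Finset.le_sup (f := fun p : S × List (A × S) => p.2.length) hp⟩
  let ext (p : S × List (A × S)) : Finset (S × List (A × S)) :=
    Finset.univ.image fun f : Fin (n - p.2.length) → A × S => (p.1, p.2 ++ List.ofFn f)
  let paths : Finset (S × List (A × S)) :=
    Finset.univ.image fun x : S × (Fin n → A × S) => (x.1, List.ofFn x.2)
  have hext (p : S × List (A × S)) : ∑ q ∈ ext p, N.pathProb τ q = N.pathProb τ p := by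
    rw [Finset.sum_image fun f _ g _ hfg =>
      List.ofFn_injective (List.append_cancel_left (Prod.ext_iff.1 hfg).2)]
    exact (pathProb_eq_sum_extend N τ p _).symm
  have hdisj : (F : Set (S × List (A × S))).PairwiseDisjoint ext := by
    intro p hp q hq hpq
    refine Finset.disjoint_left.2 fun r hrp hrq => hpq ?_
    obtain ⟨f, -, rfl⟩ := Finset.mem_image.1 hrp
    obtain ⟨g, -, hg⟩ := Finset.mem_image.1 hrq
    simp only [Prod.mk.injEq] at hg
    obtain ⟨h₁, h₂⟩ := hg
    rcases List.prefix_or_prefix_of_prefix (h₂ ▸ List.prefix_append q.2 (List.ofFn g))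
      (List.prefix_append p.2 (List.ofFn f)) with h | h
    · exact (hF.eq hq hp ⟨h₁, h⟩).symm
    · exact hF.eq hp hq ⟨h₁.symm, h⟩
  have hpaths : F.biUnion ext ⊆ paths := by
    intro r hr
    obtain ⟨p, hp, hr⟩ := Finset.mem_biUnion.1 hr
    obtain ⟨f, -, rfl⟩ := Finset.mem_image.1 hr
    have hlen : (p.2 ++ List.ofFn f).length = n := by
      simp only [List.length_append, List.length_ofFn]; have := hn p hp; omega
    generalize p.2 ++ List.ofFn f = l at hlen
    subst hlen
    exact Finset.mem_image.2 ⟨(p.1, l.get), Finset.mem_univ _, by simp [List.ofFn_get]⟩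
  calc ∑ p ∈ F, N.pathProb τ p = ∑ q ∈ F.biUnion ext, N.pathProb τ q := by
        rw [Finset.sum_biUnion hdisj]; exact Finset.sum_congr rfl fun p _ => (hext p).symm
    _ ≤ ∑ q ∈ paths, N.pathProb τ q := Finset.sum_le_sum_of_subset hpaths
    _ = 1 := by
        rw [Finset.sum_image fun x _ y _ hxy => by
          simp only [Prod.mk.injEq] at hxy; exact Prod.ext hxy.1 (List.ofFn_injective hxy.2)]
        exact sum_pathProb_ofFn N τ n

lemma tsum_le_one_of_isAntichain (g : S × List (A × S) → ℝ≥0∞)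
    (hg : ∀ p, g p ≤ N.pathProb τ p) (hanti : IsAntichain PathPrefix (Function.support g)) :
    ∑' p, g p ≤ 1 := by
  classical
  rw [ENNReal.tsum_eq_iSup_sum]
  refine iSup_le fun F => ?_
  calc ∑ p ∈ F, g p = ∑ p ∈ F.filter (g · ≠ 0), g p := (Finset.sum_filter_ne_zero F).symm
    _ ≤ ∑ p ∈ F.filter (g · ≠ 0), N.pathProb τ p := Finset.sum_le_sum fun p _ => hg p
    _ ≤ 1 := sum_pathProb_le_one N τ _ (hanti.subset fun p hp => (Finset.mem_filter.1 hp).2)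

lemma probReach_le_one (U : Set S) : N.probReach τ U ≤ 1 :=
  tsum_le_one_of_isAntichain N τ _ (fun p => by split_ifs <;> simp)
    ((isAntichain_firstHit U).subset fun p hp => by by_contra h; exact hp (if_neg h))

lemma exists_firstHit_of_probReach_eq_one {U : Set S} (hU : N.probReach τ U = 1)
    {q : S × List (A × S)} (hq : N.pathProb τ q ≠ 0) :
    ∃ p, firstHit U p.1 p.2 ∧ N.pathProb τ p ≠ 0 ∧
      (PathPrefix p q ∨ PathPrefix q p) := by
  classical
  by_contra! h
  have hq_fh : ¬ firstHit U q.1 q.2 := fun hfh => (h q hfh hq).1 ⟨rfl, List.prefix_refl _⟩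
  -- `q` together with the first-hit paths would carry mass `1 + P(q) > 1`
  let g p :=
    (if firstHit U p.1 p.2 then N.pathProb τ p else 0) + if p = q then N.pathProb τ q else 0
  have hg : ∀ p, g p ≤ N.pathProb τ p := by
    intro p
    by_cases hp : firstHit U p.1 p.2
    · have : p ≠ q := by rintro rfl; exact hq_fh hp
      simp [g, hp, this]
    · by_cases hpq : p = q
      · subst hpq; simp [g, hp]
      · simp [g, hp, hpq]
  have hsupp :
      ∀ p ∈ Function.support g, (firstHit U p.1 p.2 ∧ N.pathProb τ p ≠ 0) ∨ p = q := by
    intro p hp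
    by_cases hpq : p = q
    · exact Or.inr hpq
    · by_cases hfh : firstHit U p.1 p.2 <;> simp_all [g]
  have hanti : IsAntichain PathPrefix (Function.support g) := by
    intro p hp p' hp' hne hpre
    rcases hsupp p hp with ⟨hfh, hpos⟩ | rfl <;>
      rcases hsupp p' hp' with ⟨hfh', hpos'⟩ | rfl
    · exact isAntichain_firstHit U hfh hfh' hne hpre
    · exact (h p hfh hpos).1 hpre
    · exact (h p' hfh' hpos').2 hpre
    · exact hne rfl
  have hle := tsum_le_one_of_isAntichain N τ g hg hanti
  rw [ENNReal.tsum_add, tsum_ite_eq] at hle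
  have hle' : 1 + N.pathProb τ q ≤ 1 + 0 := by
    rw [add_zero]; nth_rewrite 1 [← hU]; exact hle
  exact hq (nonpos_iff_eq_zero.1 ((ENNReal.add_le_add_iff_left ENNReal.one_ne_top).1 hle'))

end Paths

section Lift

variable {X : Type} (E : A → Z → ℤ) (cap : ℕ) (f : X → Z)

/-- One step of `M×` read along a step of `M`, for states `X` observed through `f`:
as in `prodTrans`, `n : Fin cap` stands for the energy `n + 1`. -/
def liftStep : Option (X × Fin cap) → A → X → Option (X × Fin cap)
  | none, _, _ => none
  | some (x, n), a, x' =>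
    if h : 1 ≤ min (cap : ℤ) ((n : ℕ) + 1 + E a (f x)) then
      some (x', ⟨(min (cap : ℤ) ((n : ℕ) + 1 + E a (f x)) - 1).toNat, by omega⟩)
    else none

def liftPath : Option (X × Fin cap) → List (A × X) → List (A × Option (X × Fin cap))
  | _, [] => []
  | t, (a, x) :: l => (a, liftStep E cap f t a x) :: liftPath (liftStep E cap f t a x) l

def initLift (x : X) : Option (X × Fin cap) :=
  if h : 0 < cap then some (x, ⟨cap - 1, by omega⟩) else none

variable {E cap f}

lemma mem_liftStep {t : Option (X × Fin cap)} {a : A} {x : X} :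
    ∀ p ∈ liftStep E cap f t a x, p.1 = x := by
  intro p hp
  rcases t with _ | ⟨y, n⟩
  · cases hp
  · simp only [liftStep] at hp
    split_ifs at hp <;> cases hp
    rfl

lemma mem_initLift {x : X} : ∀ p ∈ initLift cap x, p.1 = x := by
  intro p hp
  simp only [initLift] at hp
  split_ifs at hp <;> cases hp
  rfl

lemma liftPath_append (t : Option (X × Fin cap)) (l₁ l₂ : List (A × X)) :
    liftPath E cap f t (l₁ ++ l₂) =
      liftPath E cap f t l₁ ++ liftPath E cap f (lastState t (liftPath E cap f t l₁)) l₂ := by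
  induction l₁ generalizing t with
  | nil => rfl
  | cons x l₁ ih => simp only [List.cons_append, liftPath, ih, lastState_cons]

lemma lastState_liftPath_none (l : List (A × X)) :
    lastState none (liftPath E cap f none l) = none := by
  induction l with
  | nil => rfl
  | cons y l ih => obtain ⟨a, x⟩ := y; rw [liftPath, lastState_cons]; exact ih

lemma ne_none_of_lastState_liftPath_ne_none {t : Option (X × Fin cap)} {l : List (A × X)}
    (h : lastState t (liftPath E cap f t l) ≠ none) : t ≠ none := by
  rintro rfl
  exact h (lastState_liftPath_none l)

lemma mem_lastState_liftPath {t : Option (X × Fin cap)} {x : X} (ht : ∀ p ∈ t, p.1 = x)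
    (l : List (A × X)) : ∀ p ∈ lastState t (liftPath E cap f t l), p.1 = lastState x l := by
  induction l generalizing t x with
  | nil => exact ht
  | cons y l ih =>
    simp only [liftPath, lastState_cons]
    exact ih mem_liftStep

lemma liftStep_map {Y : Type} {f' : Y → Z} (g : X → Y) (hfg : ∀ x, f' (g x) = f x)
    (t : Option (X × Fin cap)) (a : A) (x : X) :
    (liftStep E cap f t a x).map (Prod.map g id) =
      liftStep E cap f' (t.map (Prod.map g id)) a (g x) := by
  rcases t with _ | ⟨y, n⟩
  · rfl
  · simp only [liftStep, Option.map_some, Prod.map, hfg, id]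
    split_ifs <;> rfl

lemma liftPath_map {Y : Type} {f' : Y → Z} (g : X → Y) (hfg : ∀ x, f' (g x) = f x)
    (t : Option (X × Fin cap)) (l : List (A × X)) :
    (liftPath E cap f t l).map (fun p => (p.1, p.2.map (Prod.map g id))) =
      liftPath E cap f' (t.map (Prod.map g id)) (l.map fun p => (p.1, g p.2)) := by
  induction l generalizing t with
  | nil => rfl
  | cons y l ih => simp only [liftPath, List.map_cons, ih, liftStep_map g hfg]

lemma exists_liftStep_eq_some {t : Option (X × Fin cap)} {a : A} {x : X}
    (h : liftStep E cap f t a x ≠ none) : ∃ n, liftStep E cap f t a x = some (x, n) := by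
  obtain ⟨⟨y, n⟩, hy⟩ := Option.ne_none_iff_exists'.1 h
  obtain rfl : y = x := mem_liftStep _ hy
  exact ⟨n, hy⟩

lemma eq_of_liftPath_eq {t : Option (X × Fin cap)} {l l' : List (A × X)}
    (hl : lastState t (liftPath E cap f t l) ≠ none)
    (h : liftPath E cap f t l = liftPath E cap f t l') : l = l' := by
  induction l generalizing t l' with
  | nil => cases l' <;> simp_all [liftPath]
  | cons x l ih =>
    obtain ⟨a, x⟩ := x
    rcases l' with _ | ⟨⟨b, y⟩, l'⟩
    · cases h
    simp only [liftPath, List.cons.injEq, Prod.mk.injEq] at h hl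
    obtain ⟨⟨rfl, hstep⟩, htail⟩ := h
    rw [lastState_cons] at hl
    obtain ⟨n, hn⟩ := exists_liftStep_eq_some (ne_none_of_lastState_liftPath_ne_none hl)
    obtain rfl : y = x := (mem_liftStep (x, n) (hstep ▸ hn)).symm
    rw [ih hl htail]

variable (E cap)

def liftHist (h : Z × List (A × Z)) : Option Z × List (A × Option Z) :=
  (some h.1, (liftPath E cap id (initLift cap h.1) h.2).map fun p => (p.1, p.2.map Prod.fst))

def transferPolicy (σ' : Policy A (Option Z)) : Policy A Z :=
  fun h => σ' (liftHist E cap h)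

end Lift

section Product

variable (M : POMDP S A Z) (E : A → Z → ℤ) (cap : ℕ)

lemma prod_init : (M.prod E cap).init = M.init.map (initLift cap) := rfl

lemma prod_trans_some (s : S) (n : Fin cap) (a : A) :
    (M.prod E cap).trans (some (s, n)) a =
      (M.trans s a).map (liftStep E cap M.obs (some (s, n)) a) := by
  show M.prodTrans E cap (some (s, n)) a =
    (M.trans s a).map fun s' => liftStep E cap M.obs (some (s, n)) a s'
  by_cases h : 1 ≤ M.EnUp E cap s a ((n : ℕ) + 1)
  · rw [prodTrans, dif_pos h]
    congr 1
    funext s'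
    simp only [liftStep]
    split
    · rfl
    · contradiction
  · rw [prodTrans, dif_neg h, ← PMF.map_const (M.trans s a)]
    congr 1
    funext s'
    simp only [liftStep]
    split
    · contradiction
    · rfl

variable {M E cap}

lemma prod_trans_liftStep {s s' : S} {n : Fin cap} {a : A}
    (h : liftStep E cap M.obs (some (s, n)) a s' ≠ none) :
    (M.prod E cap).trans (some (s, n)) a (liftStep E cap M.obs (some (s, n)) a s') =
      M.trans s a s' := by
  rw [prod_trans_some]
  refine PMF.map_apply_of_injective_at fun s'' hs'' => ?_
  obtain ⟨m, hm⟩ := exists_liftStep_eq_some h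
  exact (mem_liftStep (s', m) (hs'' ▸ hm)).symm

lemma exists_liftStep_eq [Nonempty S] {t t' : ProdState S cap} {a : A}
    (h : (M.prod E cap).trans t a t' ≠ 0) : ∃ s', liftStep E cap M.obs t a s' = t' := by
  rcases t with _ | ⟨s, n⟩
  · refine ⟨Classical.arbitrary S, ?_⟩
    by_contra hne
    exact h (PMF.pure_apply_of_ne (a := none) t' fun h' => hne h'.symm)
  · rw [prod_trans_some, ← PMF.mem_support_iff, PMF.mem_support_map_iff] at h
    obtain ⟨s', -, hs'⟩ := h
    exact ⟨s', hs'⟩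

lemma obsHist_liftPath (hcap : 0 < cap) (s₀ : S) (l : List (A × S)) :
    (M.prod E cap).obsHist (initLift cap s₀) (liftPath E cap M.obs (initLift cap s₀) l) =
      liftHist E cap (M.obsHist s₀ l) := by
  have hinit : (initLift cap s₀).map (Prod.map M.obs id) = initLift cap (M.obs s₀) := by
    simp only [initLift, hcap, dite_true, Option.map_some, Prod.map, id]
  simp only [obsHist, liftHist, ← hinit, ← liftPath_map M.obs (fun _ => rfl), List.map_map]
  simp only [prod, initLift, hcap, dite_true, Option.map_some, Function.comp_def,
    Option.map_map, Prod.map, id]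

variable (M E cap)

def prodLift (p : S × List (A × S)) : ProdState S cap × List (A × ProdState S cap) :=
  (initLift cap p.1, liftPath E cap M.obs (initLift cap p.1) p.2)

/-- The energy stays positive along `p` (as `⊥` is absorbing, it suffices to look at the last
state of the lift). -/
def PathSafe (p : S × List (A × S)) : Prop :=
  lastState (M.prodLift E cap p).1 (M.prodLift E cap p).2 ≠ none

variable {M E cap}

lemma exists_initLift_eq_some_of_pathSafe {p : S × List (A × S)} (hp : M.PathSafe E cap p) :
    ∃ n, initLift cap p.1 = some (p.1, n) := by
  obtain ⟨⟨s, n⟩, hs⟩ :=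
    Option.ne_none_iff_exists'.1 (ne_none_of_lastState_liftPath_ne_none hp)
  obtain rfl : s = p.1 := mem_initLift _ hs
  exact ⟨n, hs⟩

lemma pos_of_pathSafe {p : S × List (A × S)} (hp : M.PathSafe E cap p) : 0 < cap := by
  obtain ⟨n, -⟩ := exists_initLift_eq_some_of_pathSafe hp
  exact n.pos

lemma PathSafe.of_append {s : S} {l r : List (A × S)} (h : M.PathSafe E cap (s, l ++ r)) :
    M.PathSafe E cap (s, l) := by
  intro hl
  simp only [PathSafe, prodLift, liftPath_append, lastState_append] at h hl
  exact h (hl ▸ lastState_liftPath_none r)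

lemma extProb_liftPath (σ' : Policy A (Option Z)) (s₀ : S) (l pre : List (A × S))
    (hsafe : M.PathSafe E cap (s₀, pre ++ l)) :
    (M.prod E cap).extProb σ' (initLift cap s₀) (liftPath E cap M.obs (initLift cap s₀) pre)
        (liftPath E cap M.obs
          (lastState (initLift cap s₀) (liftPath E cap M.obs (initLift cap s₀) pre)) l) =
      M.extProb (transferPolicy E cap σ') s₀ pre l := by
  induction l generalizing pre with
  | nil => rfl
  | cons x l ih =>
    obtain ⟨a, s'⟩ := x
    have halive := hsafe
    simp only [PathSafe, prodLift, liftPath_append, lastState_append, liftPath,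
      lastState_cons] at halive
    obtain ⟨m, hm⟩ := exists_liftStep_eq_some (ne_none_of_lastState_liftPath_ne_none halive)
    rcases hsn : lastState (initLift cap s₀) (liftPath E cap M.obs (initLift cap s₀) pre) with
      _ | ⟨s, n⟩
    · rw [hsn] at hm; cases hm
    obtain rfl : s = lastState s₀ pre := mem_lastState_liftPath mem_initLift pre _ hsn
    have hih := ih (pre ++ [(a, s')]) (by simpa using hsafe)
    simp only [liftPath_append, lastState_append, liftPath, lastState_cons, lastState_nil] at hih
    rw [liftPath, extProb, extProb, ← hih, obsHist_liftPath (pos_of_pathSafe hsafe)]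
    rw [hsn] at hm ⊢
    rw [prod_trans_liftStep (by rw [hm]; exact Option.some_ne_none _)]
    rfl

lemma pathProb_prodLift (σ' : Policy A (Option Z)) {p : S × List (A × S)}
    (hp : M.PathSafe E cap p) :
    (M.prod E cap).pathProb σ' (M.prodLift E cap p) = M.pathProb (transferPolicy E cap σ') p := by
  obtain ⟨n, hn⟩ := exists_initLift_eq_some_of_pathSafe hp
  have hinit : (M.prod E cap).init (initLift cap p.1) = M.init p.1 := by
    rw [prod_init]
    refine PMF.map_apply_of_injective_at fun s hs => ?_
    rw [hn] at hs
    exact (mem_initLift _ hs).symm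
  rw [pathProb, pathProb, prodLift, hinit]
  exact congrArg _ (extProb_liftPath σ' p.1 p.2 [] hp)

lemma firstHit_liftPath (T : Set S) {s : S} {n : Fin cap} {l : List (A × S)}
    (hl : lastState (some (s, n)) (liftPath E cap M.obs (some (s, n)) l) ≠ none) :
    firstHit (prodTarget T cap) (some (s, n)) (liftPath E cap M.obs (some (s, n)) l) ↔
      firstHit T s l := by
  have hmem {s : S} {n : Fin cap} : some (s, n) ∈ prodTarget T cap ↔ s ∈ T :=
    ⟨fun ⟨_, hp, hs⟩ => by cases hp; exact hs, fun hs => ⟨_, rfl, hs⟩⟩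
  induction l generalizing s n with
  | nil => exact hmem
  | cons x l ih =>
    obtain ⟨a, s'⟩ := x
    simp only [liftPath, lastState_cons] at hl ⊢
    obtain ⟨m, hm⟩ := exists_liftStep_eq_some (ne_none_of_lastState_liftPath_ne_none hl)
    rw [hm] at hl ⊢
    exact and_congr (not_congr hmem) (ih hl)

lemma pathCost_liftPath (c : S → A → ℕ) {s : S} {n : Fin cap} {l : List (A × S)}
    (hl : lastState (some (s, n)) (liftPath E cap M.obs (some (s, n)) l) ≠ none) :
    pathCost (prodCost c cap) (some (s, n)) (liftPath E cap M.obs (some (s, n)) l) =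
      pathCost c s l := by
  induction l generalizing s n with
  | nil => rfl
  | cons x l ih =>
    obtain ⟨a, s'⟩ := x
    simp only [liftPath, lastState_cons] at hl ⊢
    obtain ⟨m, hm⟩ := exists_liftStep_eq_some (ne_none_of_lastState_liftPath_ne_none hl)
    rw [hm] at hl ⊢
    exact congrArg (c s a + ·) (ih hl)

lemma exists_liftPath_eq [Nonempty S] (σ' : Policy A (Option Z)) (t₀ : ProdState S cap)
    (l pre : List (A × ProdState S cap)) (h : (M.prod E cap).extProb σ' t₀ pre l ≠ 0) :
    ∃ l₀, liftPath E cap M.obs (lastState t₀ pre) l₀ = l := by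
  induction l generalizing pre with
  | nil => exact ⟨[], rfl⟩
  | cons x l ih =>
    obtain ⟨a, t'⟩ := x
    rw [extProb] at h
    obtain ⟨s', hs'⟩ := exists_liftStep_eq (right_ne_zero_of_mul (left_ne_zero_of_mul h))
    obtain ⟨l₀, hl₀⟩ := ih (pre ++ [(a, t')]) (right_ne_zero_of_mul h)
    rw [lastState_concat] at hl₀
    exact ⟨(a, s') :: l₀, by rw [liftPath, hs', hl₀]⟩

lemma injOn_prodLift : Set.InjOn (M.prodLift E cap) {p | M.PathSafe E cap p} := by
  rintro ⟨s, l⟩ hp ⟨s', l'⟩ hp' h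
  obtain ⟨n, hn⟩ := exists_initLift_eq_some_of_pathSafe hp
  obtain ⟨n', hn'⟩ := exists_initLift_eq_some_of_pathSafe hp'
  simp only [prodLift, Prod.mk.injEq] at h
  obtain rfl : s = s' := by
    have := h.1
    rw [hn, hn'] at this
    exact (Prod.ext_iff.1 (Option.some_injective _ this)).1
  exact Prod.ext rfl (eq_of_liftPath_eq hp h.2)

lemma firstHit_prodLift (T : Set S) {p : S × List (A × S)} (hp : M.PathSafe E cap p) :
    firstHit (prodTarget T cap) (M.prodLift E cap p).1 (M.prodLift E cap p).2 ↔
      firstHit T p.1 p.2 := by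
  obtain ⟨n, hn⟩ := exists_initLift_eq_some_of_pathSafe hp
  simp only [PathSafe, prodLift, hn] at hp ⊢
  exact firstHit_liftPath T hp

lemma pathCost_prodLift (c : S → A → ℕ) {p : S × List (A × S)} (hp : M.PathSafe E cap p) :
    pathCost (prodCost c cap) (M.prodLift E cap p).1 (M.prodLift E cap p).2 =
      pathCost c p.1 p.2 := by
  obtain ⟨n, hn⟩ := exists_initLift_eq_some_of_pathSafe hp
  simp only [PathSafe, prodLift, hn] at hp ⊢
  exact pathCost_liftPath c hp

/-- `prodLift` maps the safe paths of `M` bijectively onto the first-hit paths of `M×` of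
positive probability. -/
lemma tsum_eq_tsum_pathSafe (σ' : Policy A (Option Z)) (T : Set S)
    {G' : ProdState S cap × List (A × ProdState S cap) → ℝ≥0∞}
    {G : S × List (A × S) → ℝ≥0∞}
    (hG' : ∀ q, G' q ≠ 0 →
      firstHit (prodTarget T cap) q.1 q.2 ∧ (M.prod E cap).pathProb σ' q ≠ 0)
    (hG : ∀ p, M.PathSafe E cap p → G' (M.prodLift E cap p) = G p) :
    ∑' q, G' q = ∑' p : {p | M.PathSafe E cap p}, G p := by
  rw [← tsum_congr fun p : {p | M.PathSafe E cap p} => hG p.1 p.2]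
  refine (Function.Injective.tsum_eq (fun p p' h => Subtype.ext (injOn_prodLift p.2 p'.2 h))
    fun q hq => ?_).symm
  obtain ⟨hfh, hpos⟩ := hG' q hq
  obtain ⟨s₀, -, hs₀⟩ : ∃ s₀ ∈ M.init.support, initLift cap s₀ = q.1 :=
    (PMF.mem_support_map_iff _ _ _).1 ((PMF.mem_support_iff _ _).2 (left_ne_zero_of_mul hpos))
  have : Nonempty S := ⟨s₀⟩
  obtain ⟨l₀, hl₀⟩ := exists_liftPath_eq σ' q.1 q.2 [] (right_ne_zero_of_mul hpos)
  have hlift : M.prodLift E cap (s₀, l₀) = q :=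
    Prod.ext hs₀ (by simp only [prodLift]; rw [hs₀]; exact hl₀)
  refine ⟨⟨(s₀, l₀), fun h => ?_⟩, hlift⟩
  have hmem := hfh.lastState_mem
  rw [← hlift, h] at hmem
  obtain ⟨_, ⟨⟩, _⟩ := hmem

variable (σ' : Policy A (Option Z)) {T : Set S}

open Classical in
lemma probReach_transferPolicy_eq_one_add
    (hreach : (M.prod E cap).probReach σ' (prodTarget T cap) = 1) :
    M.probReach (transferPolicy E cap σ') T = 1 + ∑' p : ↥{p | M.PathSafe E cap p}ᶜ,
      if firstHit T p.1.1 p.1.2 then M.pathProb (transferPolicy E cap σ') p else 0 := by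
  rw [probReach, ← ENNReal.summable.tsum_add_tsum_compl ENNReal.summable, ← hreach, probReach]
  congr 1
  refine (tsum_eq_tsum_pathSafe σ' T (G := fun p => if firstHit T p.1 p.2 then
    M.pathProb (transferPolicy E cap σ') p else 0) (fun q hq => ?_) fun p hp => ?_).symm
  · by_cases h : firstHit (prodTarget T cap) q.1 q.2 <;> simp_all
  · simp only [firstHit_prodLift T hp, pathProb_prodLift σ' hp]

variable [Fintype S] [Fintype A]

lemma probReach_transferPolicy (hreach : (M.prod E cap).probReach σ' (prodTarget T cap) = 1) :
    M.probReach (transferPolicy E cap σ') T = 1 :=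
  le_antisymm (probReach_le_one _ _ T)
    (by rw [probReach_transferPolicy_eq_one_add σ' hreach]; exact le_self_add)

lemma pathProb_transferPolicy_eq_zero
    (hreach : (M.prod E cap).probReach σ' (prodTarget T cap) = 1) {p : S × List (A × S)}
    (hfh : firstHit T p.1 p.2) (hp : ¬ M.PathSafe E cap p) :
    M.pathProb (transferPolicy E cap σ') p = 0 := by
  have h := probReach_transferPolicy_eq_one_add σ' hreach
  rw [probReach_transferPolicy σ' hreach] at h
  have h0 := ENNReal.tsum_eq_zero.1
    ((ENNReal.add_right_inj ENNReal.one_ne_top).1 (h.symm.trans (add_zero 1).symm)) ⟨p, hp⟩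
  simpa [hfh] using h0

lemma expCost_transferPolicy (c : S → A → ℕ)
    (hreach : (M.prod E cap).probReach σ' (prodTarget T cap) = 1) :
    M.expCost (transferPolicy E cap σ') T c =
      (M.prod E cap).expCost σ' (prodTarget T cap) (prodCost c cap) := by
  rw [expCost, expCost, probReach_transferPolicy σ' hreach, hreach,
    ← ENNReal.summable.tsum_add_tsum_compl (s := {p | M.PathSafe E cap p}) ENNReal.summable]
  classical
  have hunsafe : ∑' p : ↥{p | M.PathSafe E cap p}ᶜ, (if firstHit T p.1.1 p.1.2 then
      M.pathProb (transferPolicy E cap σ') p * (pathCost c p.1.1 p.1.2 : ℝ≥0∞) else 0) = 0 :=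
    ENNReal.tsum_eq_zero.2 fun p => by
      split_ifs with h
      · rw [pathProb_transferPolicy_eq_zero σ' hreach h p.2, zero_mul]
      · rfl
  rw [hunsafe, add_zero]
  congr 1
  refine (tsum_eq_tsum_pathSafe σ' T (G := fun p => if firstHit T p.1 p.2 then
    M.pathProb (transferPolicy E cap σ') p * (pathCost c p.1 p.2 : ℝ≥0∞) else 0)
    (fun q hq => ?_) fun p hp => ?_).symm
  · by_cases h : firstHit (prodTarget T cap) q.1 q.2 <;> simp_all
  · simp only [firstHit_prodLift T hp, pathProb_prodLift σ' hp, pathCost_prodLift c hp]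

end Product

section Runs

variable (st : ℕ → S) (ac : ℕ → A)

def runSteps (k : ℕ) : List (A × S) :=
  (List.range k).map fun j => (ac j, st (j + 1))

lemma runSteps_succ (k : ℕ) :
    runSteps st ac (k + 1) = runSteps st ac k ++ [(ac k, st (k + 1))] := by
  simp only [runSteps, List.range_succ, List.map_append, List.map_cons, List.map_nil]

lemma lastState_runSteps (k : ℕ) : lastState (st 0) (runSteps st ac k) = st k := by
  cases k with
  | zero => rfl
  | succ k => rw [runSteps_succ, lastState_concat]

lemma eq_runSteps_of_prefix {k : ℕ} {l : List (A × S)} (h : l <+: runSteps st ac k) :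
    l = runSteps st ac l.length := by
  have hk : l.length ≤ k := by simpa [runSteps] using h.length_le
  rw [List.prefix_iff_eq_take.1 h, runSteps, ← List.map_take, List.take_range, Nat.min_eq_left hk]
  simp [runSteps]

lemma obsHist_runSteps (M : POMDP S A Z) (k : ℕ) :
    M.obsHist (st 0) (runSteps st ac k) = M.histPrefix st ac k := by
  simp only [obsHist, histPrefix, runSteps, List.map_map, Function.comp_def]

variable {st ac}

lemma pathProb_runSteps_ne_zero (M : POMDP S A Z) (σ : Policy A Z) (hrun : M.IsInfRun st ac)
    (hconf : M.Conforms σ st ac) (k : ℕ) : M.pathProb σ (st 0, runSteps st ac k) ≠ 0 := by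
  refine mul_ne_zero ((PMF.mem_support_iff _ _).1 hrun.1) ?_
  induction k with
  | zero => exact one_ne_zero
  | succ k ih =>
    rw [runSteps_succ, extProb_append, List.nil_append]
    refine mul_ne_zero ih ?_
    rw [extProb, extProb, mul_one, lastState_runSteps, obsHist_runSteps]
    exact mul_ne_zero (hconf k) (hrun.2 k)

variable (M : POMDP S A Z) (E : A → Z → ℤ) (cap : ℕ)

lemma lastState_liftPath_runSteps (k : ℕ) :
    lastState (initLift cap (st 0))
        (liftPath E cap M.obs (initLift cap (st 0)) (runSteps st ac k)) = none ∨
    ∃ n : Fin cap, lastState (initLift cap (st 0))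
      (liftPath E cap M.obs (initLift cap (st 0)) (runSteps st ac k)) = some (st k, n) ∧
      ((n : ℕ) : ℤ) + 1 = M.EL E cap st ac k := by
  induction k with
  | zero =>
    simp only [runSteps, List.range_zero, List.map_nil, liftPath, lastState_nil, initLift]
    split_ifs with hcap
    · exact Or.inr ⟨_, rfl, by simp only [EL]; omega⟩
    · exact Or.inl rfl
  | succ k ih =>
    rw [runSteps_succ, liftPath_append, lastState_append]
    rcases ih with h | ⟨n, h, hn⟩
    · rw [h]; exact Or.inl (lastState_liftPath_none _)
    · rw [h]
      simp only [liftPath, lastState_cons, lastState_nil, liftStep]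
      have hEL : M.EL E cap st ac (k + 1) =
          min (cap : ℤ) ((n : ℕ) + 1 + E (ac k) (M.obs (st k))) := by
        rw [hn]; rfl
      split_ifs with hpos
      · exact Or.inr ⟨_, rfl, by simp only; omega⟩
      · exact Or.inl rfl

lemma not_pathSafe_runSteps {k : ℕ} (hk : M.EL E cap st ac k ≤ 0) :
    ¬ M.PathSafe E cap (st 0, runSteps st ac k) := by
  intro hsafe
  rcases M.lastState_liftPath_runSteps E cap k with h | ⟨n, -, hn⟩
  · exact hsafe h
  · omega

end Runs

lemma enSafe_transferPolicy [Fintype S] [Fintype A] (M : POMDP S A Z) (T : Set S)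
    (E : A → Z → ℤ) (cap : ℕ) (σ' : Policy A (Option Z))
    (hreach : (M.prod E cap).probReach σ' (prodTarget T cap) = 1) :
    M.EnSafe T E cap (transferPolicy E cap σ') := by
  intro st ac hrun hconf i _ hT
  by_contra! hEL
  obtain ⟨p, hfh, hpos, hcmp⟩ := M.exists_firstHit_of_probReach_eq_one _
    (probReach_transferPolicy σ' hreach) (pathProb_runSteps_ne_zero M _ hrun hconf i)
  obtain ⟨r, rfl⟩ : ∃ r, p = (st 0, runSteps st ac i ++ r) := by
    rcases hcmp with ⟨h₁, h₂⟩ | ⟨h₁, r, h₂⟩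
    · have hlen : p.2.length ≤ i := by simpa [runSteps] using h₂.length_le
      have hmem := hfh.lastState_mem
      have hp := eq_runSteps_of_prefix st ac h₂
      rw [h₁, hp, lastState_runSteps] at hmem
      obtain rfl : p.2.length = i := by
        by_contra hne
        exact hT _ (by omega) hmem
      exact ⟨[], Prod.ext h₁ (by rw [List.append_nil]; exact hp)⟩
    · exact ⟨r, Prod.ext h₁.symm h₂.symm⟩
  exact hpos (pathProb_transferPolicy_eq_zero σ' hreach hfh
    fun h => not_pathSafe_runSteps M E cap hEL h.of_append)

end POMDP

theorem stmt12_general {S A Z : Type} [Fintype S] [Fintype A]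
    (M : POMDP S A Z) (T : Set S) (c : S → A → ℕ)
    (E : A → Z → ℤ) (cap : ℕ) (σ' : POMDP.Policy A (Option Z))
    (hreach : (M.prod E cap).probReach σ' (POMDP.prodTarget T cap) = 1) :
    ∃ σ : POMDP.Policy A Z,
      M.EnSafe T E cap σ ∧ M.probReach σ T = 1 ∧
      M.expCost σ T c =
        (M.prod E cap).expCost σ' (POMDP.prodTarget T cap) (POMDP.prodCost c cap) :=
  ⟨POMDP.transferPolicy E cap σ', POMDP.enSafe_transferPolicy M T E cap σ' hreach,
    POMDP.probReach_transferPolicy σ' hreach, POMDP.expCost_transferPolicy σ' c hreach⟩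

/-- policy transfer from `M×` to `M`: for every policy `σ'` of `M×`
reaching `T×` almost surely there is an energy-safe policy `σ` of `M` reaching `T`
almost surely with the same expected total cost. -/
theorem stmt12 {S A Z : Type} [Fintype S] [Fintype A] [Fintype Z]
    (M : POMDP S A Z) (T : Set S) (c : S → A → ℕ) (hc : ∀ s a, 0 < c s a)
    (E : A → Z → ℤ) (cap : ℕ) (σ' : POMDP.Policy A (Option Z))
    (hreach : (M.prod E cap).probReach σ' (POMDP.prodTarget T cap) = 1) :
    ∃ σ : POMDP.Policy A Z,
      M.EnSafe T E cap σ ∧ M.probReach σ T = 1 ∧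
      M.expCost σ T c =
        (M.prod E cap).expCost σ' (POMDP.prodTarget T cap) (POMDP.prodCost c cap) :=
  stmt12_general M T c E cap σ' hreach
end
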